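/- arXiv:1210.2235 — 3 statements merged into one kernel-verified Lean document; each statement's English description precedes it below -/
import Mathlib

section
/- Let X be a compact metrizable Hausdorff space and let f : X → [0,∞] be a lower semicontinuous function which is the pointwise supremum of an increasing net (f_α) of lower semicontinuous functions f_α : X → [0,∞]. Then f is the pointwise supremum of some increasing sequence extracted from the net, i.e., there exist indices α₁ ≤ α₂ ≤ ⋯ such that f(x) = sup_i f_{α_i}(x) for all x ∈ X. -/
open scoped ENNReal

/-!
Since each `f α` is lower semicontinuous, `{F > d} = ⋃ α, {f α > d}` is a union of open sets. In a
second-countable space countably many of them suffice, and letting `d` run through a countable set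
which is dense enough in the codomain, countably many indices already give `F` as their supremum.
A directed set contains an increasing sequence dominating any countable subset, and monotonicity
of the net transfers the supremum to that sequence. Compact metrizable spaces are second countable.
-/

open Set TopologicalSpace

theorem exists_monotone_seq_forall_le {ι : Type*} [Preorder ι] [IsDirectedOrder ι]
    (c : ℕ → ι) : ∃ φ : ℕ → ι, Monotone φ ∧ ∀ n, c n ≤ φ n := by
  choose ub hub using exists_ge_ge (α := ι)
  let φ : ℕ → ι := fun n => Nat.rec (c 0) (fun n b => ub b (c (n + 1))) n
  refine ⟨φ, monotone_nat_of_le_succ fun n => (hub _ _).1, fun n => ?_⟩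
  cases n with
  | zero => exact le_rfl
  | succ n => exact (hub _ _).2

theorem Set.Countable.exists_monotone_seq_forall_exists_le {ι : Type*} [Preorder ι]
    [IsDirectedOrder ι] [Nonempty ι] {T : Set ι} (hT : T.Countable) :
    ∃ φ : ℕ → ι, Monotone φ ∧ ∀ i ∈ T, ∃ n, i ≤ φ n := by
  obtain ⟨c, hc⟩ := countable_iff_exists_subset_range.1 hT
  obtain ⟨φ, hφ, hcφ⟩ := exists_monotone_seq_forall_le c
  refine ⟨φ, hφ, fun i hi => ?_⟩
  obtain ⟨n, rfl⟩ := hc hi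
  exact ⟨n, hcφ n⟩

/-- Take a countable dense set together with the countably many points that have an immediate
successor. -/
theorem exists_countable_forall_lt_exists_le_lt (β : Type*) [LinearOrder β] [TopologicalSpace β]
    [OrderTopology β] [SecondCountableTopology β] :
    ∃ D : Set β, D.Countable ∧ ∀ a b, a < b → ∃ d ∈ D, a ≤ d ∧ d < b := by
  obtain ⟨s, hsc, hsd⟩ := exists_countable_dense β
  refine ⟨s ∪ {x | ∃ y, x ⋖ y}, hsc.union countable_setOfPred_covBy_right, fun a b hab => ?_⟩
  by_cases hcov : a ⋖ b
  · exact ⟨a, Or.inr ⟨b, hcov⟩, le_rfl, hab⟩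
  · obtain ⟨d, hds, had, hdb⟩ :=
      hsd.exists_mem_open isOpen_Ioo ((not_covBy_iff_exists_mem_Ioo hab).1 hcov)
    exact ⟨d, Or.inl hds, had.le, hdb⟩

theorem exists_countable_iSup_eq_of_lowerSemicontinuous {X ι β : Type*} [TopologicalSpace X]
    [SecondCountableTopology X] [CompleteLinearOrder β] [TopologicalSpace β] [OrderTopology β]
    [SecondCountableTopology β] {f : ι → X → β} (hf : ∀ i, LowerSemicontinuous (f i)) :
    ∃ T : Set ι, T.Countable ∧ ∀ x, ⨆ i ∈ T, f i x = ⨆ i, f i x := by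
  obtain ⟨D, hDc, hD⟩ := exists_countable_forall_lt_exists_le_lt β
  have hLindelof (d : β) : ∃ T : Set ι, T.Countable ∧
      ⋃ i ∈ T, f i ⁻¹' Ioi d = ⋃ i, f i ⁻¹' Ioi d :=
    isOpen_iUnion_countable _ fun i => (hf i).isOpen_preimage d
  choose T hTc hT using hLindelof
  refine ⟨⋃ d ∈ D, T d, hDc.biUnion fun d _ => hTc d, fun x => ?_⟩
  refine le_antisymm (iSup₂_le fun i _ => le_iSup (f · x) i) (le_of_forall_lt fun a ha => ?_)
  obtain ⟨i, hi⟩ := lt_iSup_iff.1 ha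
  obtain ⟨d, hdD, had, hdi⟩ := hD a (f i x) hi
  have hx : x ∈ ⋃ j ∈ T d, f j ⁻¹' Ioi d := (hT d).symm ▸ mem_iUnion.2 ⟨i, hdi⟩
  obtain ⟨j, hj, hdj⟩ := mem_iUnion₂.1 hx
  exact had.trans_lt (hdj.trans_le (le_iSup₂ (f := fun j (_ : j ∈ ⋃ d ∈ D, T d) => f j x) j
    (mem_biUnion hdD hj)))

theorem exists_monotone_seq_iSup_eq_of_lowerSemicontinuous {X ι β : Type*} [TopologicalSpace X]
    [SecondCountableTopology X] [Preorder ι] [IsDirectedOrder ι] [Nonempty ι]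
    [CompleteLinearOrder β] [TopologicalSpace β] [OrderTopology β] [SecondCountableTopology β]
    {f : ι → X → β} (hf : ∀ i, LowerSemicontinuous (f i)) (hmono : Monotone f) :
    ∃ φ : ℕ → ι, Monotone φ ∧ ∀ x, ⨆ n, f (φ n) x = ⨆ i, f i x := by
  obtain ⟨T, hTc, hT⟩ := exists_countable_iSup_eq_of_lowerSemicontinuous hf
  obtain ⟨φ, hφ, hTφ⟩ := hTc.exists_monotone_seq_forall_exists_le
  refine ⟨φ, hφ, fun x => le_antisymm (iSup_le fun n => le_iSup (f · x) (φ n)) ?_⟩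
  rw [← hT x]
  refine iSup₂_le fun i hi => ?_
  obtain ⟨n, hn⟩ := hTφ i hi
  exact (hmono hn x).trans (le_iSup (fun n => f (φ n) x) n)

theorem stmt_0_general {X : Type*} [TopologicalSpace X] [CompactSpace X]
    [TopologicalSpace.MetrizableSpace X]
    {ι : Type*} [Preorder ι] [Nonempty ι] [IsDirected ι (· ≤ ·)]
    (f : ι → X → ℝ≥0∞) (F : X → ℝ≥0∞)
    (hf : ∀ α, LowerSemicontinuous (f α))
    (hmono : Monotone f)
    (hsup : ∀ x, F x = ⨆ α, f α x) :
    ∃ φ : ℕ → ι, Monotone φ ∧ ∀ x, F x = ⨆ i, f (φ i) x := by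
  let _ : MetricSpace X := metrizableSpaceMetric X
  obtain ⟨φ, hφ, hφsup⟩ := exists_monotone_seq_iSup_eq_of_lowerSemicontinuous hf hmono
  exact ⟨φ, hφ, fun x => (hsup x).trans (hφsup x).symm⟩

/-- If `F : X → [0,∞]` on a compact metrizable space is lower semicontinuous and is the
pointwise supremum of an increasing net of lower semicontinuous functions, then `F` is the
pointwise supremum of an increasing sequence extracted from the net. -/
theorem stmt_0 {X : Type*} [TopologicalSpace X] [CompactSpace X] [T2Space X]
    [TopologicalSpace.MetrizableSpace X]
    {ι : Type*} [Preorder ι] [Nonempty ι] [IsDirected ι (· ≤ ·)]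
    (f : ι → X → ℝ≥0∞) (F : X → ℝ≥0∞)
    (hF : LowerSemicontinuous F)
    (hf : ∀ α, LowerSemicontinuous (f α))
    (hmono : Monotone f)
    (hsup : ∀ x, F x = ⨆ α, f α x) :
    ∃ φ : ℕ → ι, Monotone φ ∧ ∀ x, F x = ⨆ i, f (φ i) x :=
  stmt_0_general f F hf hmono hsup
end

section
/- Let K be a compact topological space, let f : K → (0,∞) be a lower semicontinuous function, and let (f_n) be an increasing sequence of continuous functions f_n : K → (0,∞) with pointwise supremum f. Suppose S is a set of continuous functions K → (0,∞) such that for every continuous g : K → (0,∞) and every ε > 0 there is h ∈ S with g - ε < h < g pointwise. Then there exists a sequence (g_n) in S such that f(x) = Σ_{n=1}^∞ g_n(x) for every x ∈ K. -/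
/-- Dependent choice along ℕ with a step relation. -/
lemma my_dep_choice {α : Type*} (P : ℕ → α → Prop) (R : ℕ → α → α → Prop)
    (h0 : ∃ a, P 0 a) (hs : ∀ n a, P n a → ∃ b, P (n + 1) b ∧ R n a b) :
    ∃ u : ℕ → α, (∀ n, P n (u n)) ∧ ∀ n, R n (u n) (u (n + 1)) := by
  choose fb hfb hR using hs
  let v : ∀ n : ℕ, {a // P n a} :=
    fun n => Nat.rec ⟨h0.choose, h0.choose_spec⟩
      (fun n p => ⟨fb n p.1 p.2, hfb n p.1 p.2⟩) n
  exact ⟨fun n => (v n).1, fun n => (v n).2, fun n => hR n (v n).1 (v n).2⟩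

/-- If a strictly positive lower semicontinuous function `f` on a nonempty compact space is the
pointwise supremum of an increasing sequence of strictly positive continuous functions, and `S`
is a set of strictly positive continuous functions which approximates every strictly positive
continuous function strictly from below within any `ε`, then `f` is the pointwise sum of a
series of functions from `S`. -/
theorem stmt_2 {K : Type*} [TopologicalSpace K] [CompactSpace K] [Nonempty K]
    (f : K → ℝ) (hflsc : LowerSemicontinuous f) (hfpos : ∀ x, 0 < f x)
    (F : ℕ → K → ℝ)
    (hFcont : ∀ n, Continuous (F n)) (hFpos : ∀ n x, 0 < F n x)
    (hFmono : ∀ n x, F n x ≤ F (n + 1) x)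
    (hFsup : ∀ x, f x = ⨆ n, F n x)
    (S : Set (K → ℝ))
    (hS : ∀ s ∈ S, Continuous s ∧ ∀ x, 0 < s x)
    (hSdense : ∀ g : K → ℝ, Continuous g → (∀ x, 0 < g x) → ∀ ε : ℝ, 0 < ε →
      ∃ h ∈ S, ∀ x, g x - ε < h x ∧ h x < g x) :
    ∃ g : ℕ → K → ℝ, (∀ n, g n ∈ S) ∧ ∀ x, HasSum (fun n => g n x) (f x) := by
  -- boundedness and convergence of F n x to f x
  have hbdd : ∀ x, BddAbove (Set.range fun n => F n x) := by
    intro x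
    by_contra h
    have h0 : (⨆ n, F n x) = 0 := Real.iSup_of_not_bddAbove h
    have := hfpos x
    rw [hFsup x, h0] at this
    exact lt_irrefl _ this
  have hFtend : ∀ x, Filter.Tendsto (fun n => F n x) Filter.atTop (nhds (f x)) := by
    intro x
    rw [hFsup x]
    exact tendsto_atTop_ciSup (monotone_nat_of_le_succ fun n => hFmono n x) (hbdd x)
  -- the recursive construction
  set P : ℕ → (K → ℝ) × (K → ℝ) → Prop := fun n p =>
    p.1 ∈ S ∧ Continuous p.2 ∧ (∀ x, F n x - 1 / ((n : ℝ) + 1) < p.2 x) ∧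
      (∀ x, p.2 x < F n x) ∧ (n = 0 → ∀ x, p.2 x = p.1 x) with hP
  set R : ℕ → (K → ℝ) × (K → ℝ) → (K → ℝ) × (K → ℝ) → Prop := fun _ p q =>
    ∀ x, q.2 x = p.2 x + q.1 x with hR
  have h0 : ∃ p, P 0 p := by
    obtain ⟨h, hhS, hh⟩ := hSdense (F 0) (hFcont 0) (hFpos 0) 1 one_pos
    refine ⟨(h, h), hhS, (hS h hhS).1, fun x => ?_, fun x => (hh x).2, fun _ x => rfl⟩
    have := (hh x).1
    norm_num
    linarith
  have hstep : ∀ n p, P n p → ∃ q, P (n + 1) q ∧ R n p q := by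
    intro n p hp
    obtain ⟨hpS, hpcont, hplow, hpupp, -⟩ := hp
    have hpos : ∀ x, 0 < F (n + 1) x - p.2 x := fun x =>
      sub_pos.2 ((hpupp x).trans_le (hFmono n x))
    obtain ⟨h, hhS, hh⟩ := hSdense (fun x => F (n + 1) x - p.2 x)
      ((hFcont (n + 1)).sub hpcont) hpos (1 / ((n : ℝ) + 2)) (by positivity)
    refine ⟨(h, fun x => p.2 x + h x), ⟨hhS, ?_, fun x => ?_, fun x => ?_,
      fun hn => absurd hn (Nat.succ_ne_zero n)⟩, fun x => rfl⟩
    · exact hpcont.add (hS h hhS).1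
    · have := (hh x).1
      have e : ((n : ℝ) + 1 + 1) = (n : ℝ) + 2 := by ring
      dsimp only
      push_cast
      rw [e]
      linarith
    · have := (hh x).2
      dsimp only
      linarith
  obtain ⟨u, hu, huR⟩ := my_dep_choice P R h0 hstep
  refine ⟨fun n => (u n).1, fun n => (hu n).1, fun x => ?_⟩
  -- partial sums equal the second components
  have hsum : ∀ n, ∑ i ∈ Finset.range (n + 1), (u i).1 x = (u n).2 x := by
    intro n
    induction n with
    | zero => simp [(hu 0).2.2.2.2 rfl x]
    | succ n ih =>
      rw [Finset.sum_range_succ, ih, huR n x]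
  have hnonneg : ∀ i : ℕ, 0 ≤ (u i).1 x := fun i => ((hS _ (hu i).1).2 x).le
  rw [hasSum_iff_tendsto_nat_of_nonneg hnonneg]
  rw [← Filter.tendsto_add_atTop_iff_nat 1]
  have hlow : Filter.Tendsto (fun n : ℕ => F n x - 1 / ((n : ℝ) + 1)) Filter.atTop (nhds (f x)) := by
    have : Filter.Tendsto (fun n : ℕ => 1 / ((n : ℝ) + 1)) Filter.atTop (nhds 0) :=
      tendsto_one_div_add_atTop_nhds_zero_nat
    simpa using (hFtend x).sub this
  refine tendsto_of_tendsto_of_tendsto_of_le_of_le hlow (hFtend x) ?_ ?_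
  · intro n
    dsimp only
    rw [hsum n]
    exact ((hu n).2.2.1 x).le
  · intro n
    dsimp only
    rw [hsum n]
    exact ((hu n).2.2.2.1 x).le
end

section
/- Let K be a compact convex metrizable subset of a locally convex space and let f : K → (0,∞] be a lower semicontinuous affine function that is the pointwise supremum of a set D of continuous affine functions K → (0,∞). If D is directed upward, then f is the pointwise supremum of an increasing sequence from D. -/
open scoped ENNReal

/-!
Since `K` is compact and metrizable, it is second countable, so by Bourbaki's Lindelöf argument
(`exists_countable_lowerSemicontinuous_isLUB`) countably many members of `D` already have
supremum `f`. Directedness then lets us replace an enumeration of them by an increasing sequence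
of members of `D` dominating it, which still has supremum `f`.
-/

theorem exists_seq_lowerSemicontinuous_isLUB {X E : Type*} [TopologicalSpace X]
    [HereditarilyLindelofSpace X] [LinearOrder E] [TopologicalSpace E] [OrderClosedTopology E]
    [DenselyOrdered E] [TopologicalSpace.SeparableSpace E] {s : X → E} {𝓕 : Set (X → E)}
    (h𝓕_cont : ∀ f ∈ 𝓕, LowerSemicontinuous f) (h𝓕 : IsLUB 𝓕 s) (h𝓕_ne : 𝓕.Nonempty) :
    ∃ u : ℕ → X → E, (∀ n, u n ∈ 𝓕) ∧ IsLUB (Set.range u) s := by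
  obtain ⟨𝓕', h𝓕'_sub, h𝓕'_count, h𝓕'⟩ :=
    exists_countable_lowerSemicontinuous_isLUB h𝓕_cont h𝓕
  obtain ⟨φ, hφ⟩ := h𝓕_ne
  have hlub : IsLUB (insert φ 𝓕') s := by
    simpa only [sup_eq_right.mpr (h𝓕.1 hφ)] using h𝓕'.insert φ
  obtain ⟨u, hu⟩ := (h𝓕'_count.insert φ).exists_eq_range (Set.insert_nonempty φ 𝓕')
  exact ⟨u, fun n => Set.insert_subset hφ h𝓕'_sub (hu ▸ Set.mem_range_self n), hu ▸ hlub⟩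

theorem DirectedOn.exists_rel_chain_above_seq {α : Type*} {r : α → α → Prop} {s : Set α}
    (hs : DirectedOn r s) {u : ℕ → α} (hu : ∀ n, u n ∈ s) :
    ∃ v : ℕ → α, (∀ n, v n ∈ s) ∧ (∀ n, r (v n) (v (n + 1))) ∧ ∀ n, r (u n) (v n) := by
  choose! T hT_mem hT_left hT_right using hs
  let v : ℕ → α := fun n => Nat.rec (T (u 0) (u 0)) (fun n w => T w (u (n + 1))) n
  have hv : ∀ n, v n ∈ s := by
    intro n
    induction n with
    | zero => exact hT_mem _ (hu 0) _ (hu 0)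
    | succ n ih => exact hT_mem _ ih _ (hu (n + 1))
  refine ⟨v, hv, fun n => hT_left _ (hv n) _ (hu (n + 1)), ?_⟩
  rintro (_ | n)
  · exact hT_left _ (hu 0) _ (hu 0)
  · exact hT_right _ (hv n) _ (hu (n + 1))

theorem stmt_8_general {E : Type*} [AddCommGroup E] [Module ℝ E] [TopologicalSpace E]
    (K : Set E) (hKcpt : IsCompact K) (hKne : K.Nonempty)
    (hKmetr : TopologicalSpace.MetrizableSpace K)
    (f : E → ℝ≥0∞)
    (hfpos : ∀ x ∈ K, 0 < f x)
    (D : Set (E → ℝ))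
    (hD : ∀ g ∈ D, ContinuousOn g K ∧ (∀ x ∈ K, 0 < g x) ∧
      ∀ x ∈ K, ∀ y ∈ K, ∀ a b : ℝ, 0 ≤ a → 0 ≤ b → a + b = 1 →
        g (a • x + b • y) = a * g x + b * g y)
    (hsup : ∀ x ∈ K, f x = ⨆ g ∈ D, ENNReal.ofReal (g x))
    (hdir : ∀ g₁ ∈ D, ∀ g₂ ∈ D, ∃ g₃ ∈ D, ∀ x ∈ K, g₁ x ≤ g₃ x ∧ g₂ x ≤ g₃ x) :
    ∃ g : ℕ → E → ℝ, (∀ n, g n ∈ D) ∧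
      (∀ n, ∀ x ∈ K, g n x ≤ g (n + 1) x) ∧
      ∀ x ∈ K, f x = ⨆ n, ENNReal.ofReal (g n x) := by
  have : CompactSpace K := isCompact_iff_compactSpace.mp hKcpt
  let := TopologicalSpace.metrizableSpaceMetric K
  let Φ : (E → ℝ) → K → ℝ≥0∞ := fun g y => ENNReal.ofReal (g y)
  have hΦ_lsc : ∀ φ ∈ Φ '' D, LowerSemicontinuous φ := by
    rintro _ ⟨g, hg, rfl⟩
    exact (ENNReal.continuous_ofReal.comp (hD g hg).1.domRestrict).lowerSemicontinuous
  have hΦ_lub : IsLUB (Φ '' D) (fun y : K => f y) := isLUB_pi.mpr fun y => by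
    rw [hsup y y.2, Set.image_image, ← sSup_image]
    exact isLUB_sSup _
  have hD_ne : D.Nonempty := by
    obtain ⟨x, hx⟩ := hKne
    by_contra hD_empty
    have := hfpos x hx
    simp_all [Set.not_nonempty_iff_eq_empty]
  obtain ⟨φ, hφΦ, hφ⟩ :=
    exists_seq_lowerSemicontinuous_isLUB hΦ_lsc hΦ_lub (hD_ne.image Φ)
  choose u huD hu using hφΦ
  obtain rfl : (fun n => Φ (u n)) = φ := funext hu
  have hdir' : DirectedOn (fun g h => ∀ x ∈ K, g x ≤ h x) D := fun g₁ h₁ g₂ h₂ =>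
    (hdir g₁ h₁ g₂ h₂).imp fun _ h =>
      ⟨h.1, fun x hx => (h.2 x hx).1, fun x hx => (h.2 x hx).2⟩
  obtain ⟨g, hgD, hg_mono, hug⟩ := hdir'.exists_rel_chain_above_seq huD
  refine ⟨g, hgD, hg_mono, fun x hx => le_antisymm ?_ ?_⟩
  · refine (isLUB_pi.mp hφ ⟨x, hx⟩).2 ?_
    rintro _ ⟨_, ⟨n, rfl⟩, rfl⟩
    exact (ENNReal.ofReal_le_ofReal (hug n x hx)).trans
      (le_iSup (fun n => ENNReal.ofReal (g n x)) n)
  · exact iSup_le fun n => hsup x hx ▸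
      le_iSup₂ (f := fun g _ => ENNReal.ofReal (g x)) (g n) (hgD n)

/-- On a compact convex metrizable set `K`, a lower semicontinuous affine function
`f : K → (0,∞]` which is the pointwise supremum of an upward-directed set `D` of strictly
positive continuous affine functions is the pointwise supremum of an increasing sequence
from `D`. -/
theorem stmt_8 {E : Type*} [AddCommGroup E] [Module ℝ E] [TopologicalSpace E]
    [LocallyConvexSpace ℝ E]
    (K : Set E) (hKcpt : IsCompact K) (hKconv : Convex ℝ K) (hKne : K.Nonempty)
    (hKmetr : TopologicalSpace.MetrizableSpace K)
    (f : E → ℝ≥0∞)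
    (hflsc : LowerSemicontinuousOn f K)
    (hfpos : ∀ x ∈ K, 0 < f x)
    (hfaff : ∀ x ∈ K, ∀ y ∈ K, ∀ a b : ℝ, 0 ≤ a → 0 ≤ b → a + b = 1 →
      f (a • x + b • y) = ENNReal.ofReal a * f x + ENNReal.ofReal b * f y)
    (D : Set (E → ℝ))
    (hD : ∀ g ∈ D, ContinuousOn g K ∧ (∀ x ∈ K, 0 < g x) ∧
      ∀ x ∈ K, ∀ y ∈ K, ∀ a b : ℝ, 0 ≤ a → 0 ≤ b → a + b = 1 →
        g (a • x + b • y) = a * g x + b * g y)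
    (hsup : ∀ x ∈ K, f x = ⨆ g ∈ D, ENNReal.ofReal (g x))
    (hdir : ∀ g₁ ∈ D, ∀ g₂ ∈ D, ∃ g₃ ∈ D, ∀ x ∈ K, g₁ x ≤ g₃ x ∧ g₂ x ≤ g₃ x) :
    ∃ g : ℕ → E → ℝ, (∀ n, g n ∈ D) ∧
      (∀ n, ∀ x ∈ K, g n x ≤ g (n + 1) x) ∧
      ∀ x ∈ K, f x = ⨆ n, ENNReal.ofReal (g n x) :=
  stmt_8_general K hKcpt hKne hKmetr f hfpos D hD hsup hdir
end
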